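/- For every real q>1, every n≥1, every m∈ℕ and every x∈(0,∞), the moments of the q-Szász operator satisfy M_{n,q}(t^{m+1};x) = (x/[n]_q)·D_q M_{n,q}(t^m;x) + x·M_{n,q}(t^m;x), where D_q acts on the variable x. -/

import Mathlib

open scoped BigOperators

/-- The `q`-integer `[k]_q = (q^k - 1)/(q - 1)`. -/
noncomputable def qNat (q : ℝ) (k : ℕ) : ℝ := (q ^ k - 1) / (q - 1)

/-- The `q`-factorial `[k]_q! = [1]_q [2]_q ⋯ [k]_q`, with `[0]_q! = 1`. -/
noncomputable def qFactorial (q : ℝ) : ℕ → ℝ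
  | 0 => 1
  | k + 1 => qFactorial q k * qNat q (k + 1)

/-- The `q`-exponential function `e_q(z) = ∑_{k=0}^∞ z^k/[k]_q!`. -/
noncomputable def qExp (q z : ℝ) : ℝ := ∑' k : ℕ, z ^ k / qFactorial q k

/-- The `q`-Szász basis function
`s_{n,k}(q;x) = q^{-k(k-1)/2} ([n]_q^k x^k/[k]_q!) e_q(-[n]_q q^{-k} x)`. -/
noncomputable def qSzaszBasis (q : ℝ) (n k : ℕ) (x : ℝ) : ℝ :=
  (q ^ (k * (k - 1) / 2))⁻¹ * (qNat q n ^ k * x ^ k / qFactorial q k) *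
    qExp q (-(qNat q n) * q ^ (-(k : ℤ)) * x)

/-- The `q`-Szász operator `M_{n,q}(f;x) = ∑_{k=0}^∞ f([k]_q/[n]_q) s_{n,k}(q;x)`. -/
noncomputable def qSzasz (q : ℝ) (n : ℕ) (f : ℝ → ℝ) (x : ℝ) : ℝ :=
  ∑' k : ℕ, f (qNat q k / qNat q n) * qSzaszBasis q n k x

/-- The weight `w_0(x) = 1`, `w_p(x) = (1 + x^p)⁻¹` for `p ≥ 1`. -/
noncomputable def weight (p : ℕ) (x : ℝ) : ℝ := if p = 0 then 1 else (1 + x ^ p)⁻¹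

/-- The weighted sup-norm `‖f‖_p = sup_{x ≥ 0} w_p(x)|f(x)|`. -/
noncomputable def wnorm (p : ℕ) (f : ℝ → ℝ) : ℝ :=
  ⨆ x : Set.Ici (0 : ℝ), weight p x.1 * |f x.1|

/-- Membership in the space `C_p`: `f` is continuous on `[0,∞)` and `w_p f` is
uniformly continuous and bounded on `[0,∞)`. -/
def MemCp (p : ℕ) (f : ℝ → ℝ) : Prop :=
  ContinuousOn f (Set.Ici 0) ∧
  UniformContinuousOn (fun x => weight p x * f x) (Set.Ici 0) ∧
  ∃ M : ℝ, ∀ x ∈ Set.Ici (0 : ℝ), |weight p x * f x| ≤ M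

/-- The second difference `Δ_h² f(x) = f(x+2h) - 2f(x+h) + f(x)`. -/
noncomputable def delta2 (f : ℝ → ℝ) (h x : ℝ) : ℝ := f (x + 2 * h) - 2 * f (x + h) + f x

/-- The second modulus of smoothness `ω_p²(f;δ) = sup_{0<h≤δ} ‖Δ_h² f‖_p`. -/
noncomputable def omega2 (p : ℕ) (f : ℝ → ℝ) (δ : ℝ) : ℝ :=
  ⨆ h : {h : ℝ // 0 < h ∧ h ≤ δ}, wnorm p (fun x => delta2 f h.1 x)

/-- The (first) modulus of continuity on `[0,∞)`:
`ω(g;δ) = sup {|g(s)-g(t)| : s,t ≥ 0, |s-t| ≤ δ}`. -/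
noncomputable def omega1 (g : ℝ → ℝ) (δ : ℝ) : ℝ :=
  sSup {d : ℝ | ∃ s t : ℝ, 0 ≤ s ∧ 0 ≤ t ∧ |s - t| ≤ δ ∧ d = |g s - g t|}

/-- The `q`-derivative `(D_q g)(x) = (g(qx) - g(x))/((q-1)x)`. -/
noncomputable def qDeriv (q : ℝ) (g : ℝ → ℝ) (x : ℝ) : ℝ := (g (q * x) - g x) / ((q - 1) * x)

/-- The `q`-Stirling-type numbers: `S_q(0,0)=1`, `S_q(m,0)=0` for `m>0`,
`S_q(m,j)=0` for `m<j`, and `S_q(m+1,j)=[j]_q S_q(m,j) + S_q(m,j-1)`. -/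
noncomputable def qStirling (q : ℝ) : ℕ → ℕ → ℝ
  | 0, 0 => 1
  | 0, _ + 1 => 0
  | _ + 1, 0 => 0
  | m + 1, j + 1 => qNat q (j + 1) * qStirling q m (j + 1) + qStirling q m j

/-!
The `q`-exponential satisfies `e_q(qz) = (1 + (q - 1)z) e_q(z)`, so dilating `x` by `q` multiplies
each basis function by a linear factor: `s_{n,k}(q;qx) = (q^k - (q - 1)[n]_q x) s_{n,k}(q;x)`.
Since `q^k - 1 = (q - 1)[k]_q`, summing against `([k]_q/[n]_q)^m` gives
`M_{n,q}(t^m;qx) - M_{n,q}(t^m;x) = (q - 1)[n]_q (M_{n,q}(t^{m+1};x) - x M_{n,q}(t^m;x))`,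
which is the recurrence after dividing by `(q - 1)x`. All series converge absolutely because
`[k]_q! ≥ k!` and `[k]_q ≤ q^k/(q - 1)`.
-/

section QSzasz

variable {q : ℝ}

lemma qNat_eq_sum_range (hq : q ≠ 1) (k : ℕ) : qNat q k = ∑ i ∈ Finset.range k, q ^ i :=
  (geom_sum_eq hq k).symm

lemma sub_one_mul_qNat (hq : q ≠ 1) (k : ℕ) : (q - 1) * qNat q k = q ^ k - 1 :=
  mul_div_cancel₀ _ (sub_ne_zero.mpr hq)

lemma natCast_le_qNat (hq : 1 < q) (k : ℕ) : (k : ℝ) ≤ qNat q k := by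
  rw [qNat_eq_sum_range hq.ne']
  simpa using Finset.sum_le_sum fun i (_ : i ∈ Finset.range k) => one_le_pow₀ (M₀ := ℝ) hq.le

lemma qNat_nonneg (hq : 1 < q) (k : ℕ) : 0 ≤ qNat q k :=
  k.cast_nonneg.trans (natCast_le_qNat hq k)

lemma qNat_pos (hq : 1 < q) {k : ℕ} (hk : 1 ≤ k) : 0 < qNat q k :=
  (Nat.cast_pos.mpr hk).trans_le (natCast_le_qNat hq k)

lemma qFactorial_succ (q : ℝ) (k : ℕ) : qFactorial q (k + 1) = qFactorial q k * qNat q (k + 1) :=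
  rfl

lemma factorial_le_qFactorial (hq : 1 < q) (k : ℕ) : (k.factorial : ℝ) ≤ qFactorial q k := by
  induction k with
  | zero => simp [qFactorial]
  | succ k ih =>
    rw [Nat.factorial_succ, Nat.cast_mul, mul_comm, qFactorial_succ]
    exact mul_le_mul ih (natCast_le_qNat hq _) (by positivity)
      ((by positivity : (0 : ℝ) ≤ _).trans ih)

lemma qFactorial_pos (hq : 1 < q) (k : ℕ) : 0 < qFactorial q k :=
  (Nat.cast_pos.mpr k.factorial_pos).trans_le (factorial_le_qFactorial hq k)

lemma summable_qExp (hq : 1 < q) (z : ℝ) : Summable fun k : ℕ => z ^ k / qFactorial q k := by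
  refine (Real.summable_pow_div_factorial |z|).of_norm_bounded (E := ℝ) fun k => ?_
  rw [Real.norm_eq_abs, abs_div, abs_pow, abs_of_pos (qFactorial_pos hq k)]
  exact div_le_div_of_nonneg_left (by positivity) (by positivity) (factorial_le_qFactorial hq k)

lemma abs_qExp_le (hq : 1 < q) {w W : ℝ} (h : |w| ≤ W) : |qExp q w| ≤ qExp q W := by
  refine tsum_of_norm_bounded (E := ℝ) (summable_qExp hq W).hasSum fun k => ?_
  rw [Real.norm_eq_abs, abs_div, abs_pow, abs_of_pos (qFactorial_pos hq k)]
  gcongr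
  exact (qFactorial_pos hq k).le

lemma qExp_q_mul (hq : 1 < q) (z : ℝ) : qExp q (q * z) = (1 + (q - 1) * z) * qExp q z := by
  have hterm : ∀ k : ℕ,
      (q * z) ^ (k + 1) / qFactorial q (k + 1) - z ^ (k + 1) / qFactorial q (k + 1) =
        (q - 1) * z * (z ^ k / qFactorial q k) := by
    intro k
    have hF := (qFactorial_pos hq k).ne'
    have hN := (qNat_pos hq k.succ_pos).ne'
    rw [qFactorial_succ, mul_pow]
    field_simp
    linear_combination -z ^ (k + 1) * sub_one_mul_qNat hq.ne' (k + 1)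
  have hdiff : qExp q (q * z) - qExp q z = (q - 1) * z * qExp q z := by
    have hsum := (summable_qExp hq (q * z)).sub (summable_qExp hq z)
    rw [qExp, qExp, ← (summable_qExp hq _).tsum_sub (summable_qExp hq _), hsum.tsum_eq_zero_add,
      tsum_congr hterm, tsum_mul_left]
    simp
  linear_combination hdiff

lemma qSzaszBasis_q_mul (hq : 1 < q) (n k : ℕ) (x : ℝ) :
    qSzaszBasis q n k (q * x) = (q ^ k - (q - 1) * qNat q n * x) * qSzaszBasis q n k x := by
  have hqk : q ^ k ≠ 0 := by positivity
  have harg : -qNat q n * q ^ (-(k : ℤ)) * (q * x) = q * (-qNat q n * q ^ (-(k : ℤ)) * x) := by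
    ring
  rw [qSzaszBasis, qSzaszBasis, harg, qExp_q_mul hq, zpow_neg, zpow_natCast]
  field_simp
  ring

lemma summable_qNat_pow_mul_qSzaszBasis (hq : 1 < q) (n j : ℕ) (x : ℝ) :
    Summable fun k => qNat q k ^ j * qSzaszBasis q n k x := by
  set c := qNat q n * |x|
  have hc : 0 ≤ c := mul_nonneg (qNat_nonneg hq n) (abs_nonneg x)
  refine ((summable_qExp hq (q ^ j * c)).mul_left (((q - 1) ^ j)⁻¹ * qExp q c)).of_norm_bounded
    fun k => ?_
  have hF := qFactorial_pos hq k
  have hA : (q ^ (k * (k - 1) / 2))⁻¹ ≤ 1 := inv_le_one_of_one_le₀ (one_le_pow₀ hq.le)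
  have hE : |qExp q (-qNat q n * q ^ (-(k : ℤ)) * x)| ≤ qExp q c := by
    refine abs_qExp_le hq ?_
    calc |-qNat q n * q ^ (-(k : ℤ)) * x| = qNat q n * (q ^ k)⁻¹ * |x| := by
          rw [abs_mul, abs_mul, abs_neg, abs_of_nonneg (qNat_nonneg hq n), zpow_neg, zpow_natCast,
            abs_of_pos (by positivity)]
      _ ≤ qNat q n * 1 * |x| := by
          have := inv_le_one_of_one_le₀ (one_le_pow₀ (M₀ := ℝ) hq.le (n := k))
          have := qNat_nonneg hq n
          gcongr
      _ = c := by ring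
  have hk : qNat q k ^ j ≤ ((q - 1) ^ j)⁻¹ * (q ^ j) ^ k := by
    have hq1 : 0 < q - 1 := sub_pos.mpr hq
    have h : ((q - 1) * qNat q k) ^ j ≤ (q ^ j) ^ k := by
      rw [← pow_mul, mul_comm j, pow_mul, sub_one_mul_qNat hq.ne']
      gcongr
      · linarith [one_le_pow₀ (M₀ := ℝ) hq.le (n := k)]
      · linarith
    rw [mul_pow] at h
    rwa [le_inv_mul_iff₀ (by positivity)]
  calc ‖qNat q k ^ j * qSzaszBasis q n k x‖
      = qNat q k ^ j * (q ^ (k * (k - 1) / 2))⁻¹ * (c ^ k / qFactorial q k)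
          * |qExp q (-qNat q n * q ^ (-(k : ℤ)) * x)| := by
        simp only [qSzaszBasis, Real.norm_eq_abs, abs_mul, abs_div, abs_pow, abs_inv,
          abs_of_nonneg (qNat_nonneg hq n), abs_of_nonneg (qNat_nonneg hq k), abs_of_pos hF,
          abs_of_pos (by positivity : (0 : ℝ) < q), c, mul_pow]
        ring
    _ ≤ ((q - 1) ^ j)⁻¹ * (q ^ j) ^ k * 1 * (c ^ k / qFactorial q k) * qExp q c := by gcongr
    _ = ((q - 1) ^ j)⁻¹ * qExp q c * ((q ^ j * c) ^ k / qFactorial q k) := by ring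

lemma summable_qSzasz_pow (hq : 1 < q) (n m : ℕ) (x : ℝ) :
    Summable fun k => (qNat q k / qNat q n) ^ m * qSzaszBasis q n k x :=
  ((summable_qNat_pow_mul_qSzaszBasis hq n m x).div_const (qNat q n ^ m)).congr fun k => by
    rw [div_pow]
    ring

lemma qSzasz_pow_q_mul_sub (hq : 1 < q) {n : ℕ} (hn : 1 ≤ n) (m : ℕ) (x : ℝ) :
    qSzasz q n (fun t => t ^ m) (q * x) - qSzasz q n (fun t => t ^ m) x =
      (q - 1) * qNat q n *
        (qSzasz q n (fun t => t ^ (m + 1)) x - x * qSzasz q n (fun t => t ^ m) x) := by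
  have hS := summable_qSzasz_pow hq n
  have hterm : ∀ k, (qNat q k / qNat q n) ^ m * qSzaszBasis q n k (q * x) -
      (qNat q k / qNat q n) ^ m * qSzaszBasis q n k x =
      (q - 1) * qNat q n * ((qNat q k / qNat q n) ^ (m + 1) * qSzaszBasis q n k x -
        x * ((qNat q k / qNat q n) ^ m * qSzaszBasis q n k x)) := by
    intro k
    have hk : qNat q n * (qNat q k / qNat q n) = qNat q k :=
      mul_div_cancel₀ _ (qNat_pos hq hn).ne'
    rw [qSzaszBasis_q_mul hq, pow_succ]
    linear_combination (-((qNat q k / qNat q n) ^ m * qSzaszBasis q n k x)) *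
        sub_one_mul_qNat hq.ne' k -
      (q - 1) * (qNat q k / qNat q n) ^ m * qSzaszBasis q n k x * hk
  simp only [qSzasz]
  rw [← (hS m (q * x)).tsum_sub (hS m x), tsum_congr hterm, tsum_mul_left,
    (hS (m + 1) x).tsum_sub ((hS m x).mul_left x), tsum_mul_left]

end QSzasz

/-- `M_{n,q}(t^{m+1};x) = (x/[n]_q) D_q M_{n,q}(t^m;x) + x M_{n,q}(t^m;x)`. -/
theorem qSzasz_moment_qDeriv_recurrence (q : ℝ) (hq : 1 < q) (n : ℕ) (hn : 1 ≤ n)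
    (m : ℕ) (x : ℝ) (hx : 0 < x) :
    qSzasz q n (fun t => t ^ (m + 1)) x =
      x / qNat q n * qDeriv q (fun y => qSzasz q n (fun t => t ^ m) y) x +
        x * qSzasz q n (fun t => t ^ m) x := by
  have hN := (qNat_pos hq hn).ne'
  have hq1 : q - 1 ≠ 0 := sub_ne_zero.mpr hq.ne'
  rw [qDeriv, qSzasz_pow_q_mul_sub hq hn]
  field_simp
  ring
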